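/- arXiv:math/0310216 — 3 statements merged into one kernel-verified Lean document; each statement's English description precedes it below -/
import Mathlib

section
/- Let p and q be coprime positive integers. The rational function ψ_{p,q} ∈ ℚ(s) is odd under inversion, ψ_{p,q}(s^{−1}) = −ψ_{p,q}(s), and it has no pole at s = 1 and its value at s = 1 is 0 (i.e. ψ_{p,q} lies in the local ring of rational functions regular at s = 1, with evaluation 0 there). -/
/-- `Δ_{p,q}(s) = ((s^{pq} − s^{−pq})(s − s^{−1})) / ((s^p − s^{−p})(s^q − s^{−q}))`,
the Alexander polynomial of the `(p,q)` torus knot evaluated at `t = s²`. -/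
noncomputable def torusDelta {F : Type*} [Field F] (p q : ℕ) (s : F) : F :=
  ((s ^ (p * q) - s⁻¹ ^ (p * q)) * (s - s⁻¹)) / ((s ^ p - s⁻¹ ^ p) * (s ^ q - s⁻¹ ^ q))

/-- `φ_{p,q}(s) = (s^p + s^{−p})/(s^p − s^{−p}) − q·(s^{pq} + s^{−pq})/(s^{pq} − s^{−pq})`. -/
noncomputable def torusPhi {F : Type*} [Field F] (p q : ℕ) (s : F) : F :=
  (s ^ p + s⁻¹ ^ p) / (s ^ p - s⁻¹ ^ p) -
    (q : F) * ((s ^ (p * q) + s⁻¹ ^ (p * q)) / (s ^ (p * q) - s⁻¹ ^ (p * q)))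

/-- `ψ_{p,q}(s) = Δ_{p,q}(s)·φ_{p,q}(s)`. -/
noncomputable def torusPsi {F : Type*} [Field F] (p q : ℕ) (s : F) : F :=
  torusDelta p q s * torusPhi p q s

/-- The 2-loop polynomial of the torus knot `T(p,q)`:
`Θ_{p,q}(s₁,s₂,s₃) = −(1/4)·Σ_{(i,j,k)} ψ_{p,q}(s_i)·ψ_{q,p}(s_j)·Δ_{p,q}(s_k)`,
the sum running over all six permutations `(i,j,k)` of `(1,2,3)`. -/
noncomputable def torusTheta {F : Type*} [Field F] (p q : ℕ) (s₁ s₂ s₃ : F) : F :=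
  -(1/4) * (torusPsi p q s₁ * torusPsi q p s₂ * torusDelta p q s₃
    + torusPsi p q s₁ * torusPsi q p s₃ * torusDelta p q s₂
    + torusPsi p q s₂ * torusPsi q p s₁ * torusDelta p q s₃
    + torusPsi p q s₂ * torusPsi q p s₃ * torusDelta p q s₁
    + torusPsi p q s₃ * torusPsi q p s₁ * torusDelta p q s₂
    + torusPsi p q s₃ * torusPsi q p s₂ * torusDelta p q s₁)

/-- The reduced 2-loop polynomial of the torus knot `T(p,q)`:
`Θ̂_{p,q}(s) = ψ_{p,q}(s)·ψ_{q,p}(s) / (2(s − s^{−1})²)`. -/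
noncomputable def torusThetaHat {F : Type*} [Field F] (p q : ℕ) (s : F) : F :=
  torusPsi p q s * torusPsi q p s / (2 * (s - s⁻¹) ^ 2)

open Polynomial

/-!
With `u = s^{2p}` the half-integer powers clear:
`ψ_{p,q}(s) = (s² - 1) s^{p+q} N_q(u) / ((u - 1)² (s^{2q} - 1) s^{pq+1})`, where
`N_q(u) = (u + 1)(u^q - 1) - q (u^q + 1)(u - 1)` is the numerator of `φ_{p,q}`.
The denominator is `(s² - 1)³` times a polynomial not vanishing at `s = 1`, while `N_q(u)` is
divisible by `(u - 1)³` (its Taylor expansion at `u = 1` cancels up to second order), so the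
numerator is divisible by `(s² - 1)⁴` and `ψ_{p,q}` vanishes at `s = 1`.
Oddness holds because `s ↦ s⁻¹` fixes `Δ_{p,q}` and negates `φ_{p,q}`.
-/

section Inversion

variable {F : Type*} [Field F] (p q : ℕ) (s : F)

theorem torusDelta_inv : torusDelta p q s⁻¹ = torusDelta p q s := by
  simp only [torusDelta, inv_inv, ← neg_sub s, ← neg_sub (s ^ _)]
  ring

theorem torusPhi_inv : torusPhi p q s⁻¹ = -torusPhi p q s := by
  simp only [torusPhi, inv_inv, ← neg_sub (s ^ _), add_comm (s⁻¹ ^ _), div_neg]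
  ring

theorem torusPsi_inv : torusPsi p q s⁻¹ = -torusPsi p q s := by
  rw [torusPsi, torusPsi, torusDelta_inv, torusPhi_inv, mul_neg]

end Inversion

section Numerator

variable {R : Type*} [CommRing R]

def torusPhiNumerator (q : ℕ) (u : R) : R :=
  (u + 1) * (u ^ q - 1) - q * (u ^ q + 1) * (u - 1)

theorem sub_one_sq_dvd_pow_sub_one_sub (u : R) (n : ℕ) :
    (u - 1) ^ 2 ∣ u ^ n - 1 - n * (u - 1) := by
  rw [sub_right_comm]
  simpa [mul_comm] using sq_dvd_add_pow_sub_sub (u - 1) 1 n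

theorem sub_one_pow_three_dvd_torusPhiNumerator (q : ℕ) (u : R) :
    (u - 1) ^ 3 ∣ torusPhiNumerator q u := by
  induction q with
  | zero => simp [torusPhiNumerator]
  | succ q ih =>
    obtain ⟨a, ha⟩ := ih
    obtain ⟨b, hb⟩ := sub_one_sq_dvd_pow_sub_one_sub u (q + 1)
    refine ⟨u * a - b, ?_⟩
    rw [torusPhiNumerator] at ha ⊢
    push_cast at hb ⊢
    -- `N_{q+1}(u) = u N_q(u) - (u - 1)(u^{q+1} - 1 - (q + 1)(u - 1))`
    linear_combination u * ha - (u - 1) * hb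

end Numerator

section ClearingDenominators

variable {F : Type*} [Field F] {s : F}

theorem pow_sub_inv_pow (hs : s ≠ 0) (n : ℕ) : s ^ n - s⁻¹ ^ n = ((s ^ 2) ^ n - 1) / s ^ n := by
  rw [inv_pow]
  field_simp
  ring

theorem pow_add_inv_pow (hs : s ≠ 0) (n : ℕ) : s ^ n + s⁻¹ ^ n = ((s ^ 2) ^ n + 1) / s ^ n := by
  rw [inv_pow]
  field_simp
  ring

theorem torusDelta_eq_div (p q : ℕ) (hs : s ≠ 0) :
    torusDelta p q s = (((s ^ 2) ^ p) ^ q - 1) * (s ^ 2 - 1) * s ^ (p + q) /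
      (((s ^ 2) ^ p - 1) * ((s ^ 2) ^ q - 1) * s ^ (p * q + 1)) := by
  have h1 : s - s⁻¹ = (s ^ 2 - 1) / s := by simpa using pow_sub_inv_pow hs 1
  rw [torusDelta, h1, pow_sub_inv_pow hs, pow_sub_inv_pow hs, pow_sub_inv_pow hs,
    div_mul_div_comm, div_mul_div_comm, div_div_div_eq, ← pow_mul]
  congr 1 <;> ring

theorem torusPhi_eq_div (p q : ℕ) (hs : s ≠ 0) (hu : (s ^ 2) ^ p ≠ 1)
    (huq : ((s ^ 2) ^ p) ^ q ≠ 1) :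
    torusPhi p q s =
      torusPhiNumerator q ((s ^ 2) ^ p) / (((s ^ 2) ^ p - 1) * (((s ^ 2) ^ p) ^ q - 1)) := by
  rw [torusPhi, pow_sub_inv_pow hs, pow_sub_inv_pow hs, pow_add_inv_pow hs, pow_add_inv_pow hs,
    div_div_div_cancel_right₀ (pow_ne_zero _ hs), div_div_div_cancel_right₀ (pow_ne_zero _ hs),
    pow_mul (s ^ 2) p q, torusPhiNumerator]
  have : (s ^ 2) ^ p - 1 ≠ 0 := sub_ne_zero.mpr hu
  have : ((s ^ 2) ^ p) ^ q - 1 ≠ 0 := sub_ne_zero.mpr huq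
  field_simp

theorem torusPsi_eq_div (p q : ℕ) (hs : s ≠ 0) (hu : (s ^ 2) ^ p ≠ 1)
    (huq : ((s ^ 2) ^ p) ^ q ≠ 1) :
    torusPsi p q s = (s ^ 2 - 1) * s ^ (p + q) * torusPhiNumerator q ((s ^ 2) ^ p) /
      (((s ^ 2) ^ p - 1) ^ 2 * ((s ^ 2) ^ q - 1) * s ^ (p * q + 1)) := by
  rw [torusPsi, torusDelta_eq_div p q hs, torusPhi_eq_div p q hs hu huq, div_mul_div_comm]
  conv_rhs => rw [← mul_div_mul_left _ _ (sub_ne_zero.mpr huq)]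
  congr 1 <;> ring

end ClearingDenominators

namespace RatFunc

variable {K : Type*} [Field K]

/-- `r` lies in the maximal ideal of the local ring of rational functions regular at `a`. -/
def VanishesAt (r : RatFunc K) (a : K) : Prop :=
  ∃ f g : K[X], r = algebraMap K[X] (RatFunc K) f / algebraMap K[X] (RatFunc K) g ∧
    g.eval a ≠ 0 ∧ f.eval a = 0

theorem vanishesAt_div_of_pow_succ_dvd {A h g : K[X]} {a : K} {k : ℕ} (h0 : h ≠ 0)
    (hA : h ^ (k + 1) ∣ A) (ha : h.eval a = 0) (hg : g.eval a ≠ 0) :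
    VanishesAt (algebraMap K[X] (RatFunc K) A / algebraMap K[X] (RatFunc K) (h ^ k * g)) a := by
  obtain ⟨c, rfl⟩ := hA
  refine ⟨h * c, g, ?_, hg, by simp [ha]⟩
  rw [pow_succ, mul_assoc, map_mul _ (h ^ k), map_mul _ (h ^ k),
    mul_div_mul_left _ _ (algebraMap_ne_zero (pow_ne_zero k h0))]

theorem X_pow_ne_one {n : ℕ} (hn : n ≠ 0) : (X : RatFunc K) ^ n ≠ 1 := by
  rw [← algebraMap_X, ← map_pow, ← map_one (algebraMap K[X] (RatFunc K)),
    (algebraMap_injective K).ne_iff]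
  intro h
  simpa [hn] using congrArg (Polynomial.eval 0) h

end RatFunc

theorem torusPsi_X_eq {K : Type*} [Field K] (p q : ℕ) (hp : p ≠ 0) (hq : q ≠ 0) :
    torusPsi p q (RatFunc.X : RatFunc K) =
      algebraMap K[X] (RatFunc K) ((X ^ 2 - 1) * X ^ (p + q) * torusPhiNumerator q ((X ^ 2) ^ p)) /
      algebraMap K[X] (RatFunc K) (((X ^ 2) ^ p - 1) ^ 2 * ((X ^ 2) ^ q - 1) * X ^ (p * q + 1)) := by
  have hX (n : ℕ) (hn : n ≠ 0) : ((RatFunc.X : RatFunc K) ^ 2) ^ n ≠ 1 := by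
    rw [← pow_mul]
    exact RatFunc.X_pow_ne_one (mul_ne_zero two_ne_zero hn)
  rw [torusPsi_eq_div p q RatFunc.X_ne_zero (hX p hp)
    (by rw [← pow_mul]; exact hX _ (mul_ne_zero hp hq))]
  simp only [torusPhiNumerator, map_mul, map_sub, map_add, map_pow, map_one, map_natCast,
    RatFunc.algebraMap_X]

theorem torusPsi_odd_and_vanishes_at_one_general (p q : ℕ) (hp : 0 < p) (hq : 0 < q) :
    torusPsi p q ((RatFunc.X : RatFunc ℚ)⁻¹) = -torusPsi p q (RatFunc.X : RatFunc ℚ) ∧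
    ∃ f g : ℚ[X],
      torusPsi p q (RatFunc.X : RatFunc ℚ) =
        algebraMap ℚ[X] (RatFunc ℚ) f / algebraMap ℚ[X] (RatFunc ℚ) g ∧
      g.eval 1 ≠ 0 ∧ f.eval 1 = 0 := by
  refine ⟨torusPsi_inv p q _, ?_⟩
  set x : ℚ[X] := X ^ 2
  have hden : (x ^ p - 1) ^ 2 * (x ^ q - 1) * X ^ (p * q + 1) =
      (x - 1) ^ 3 * ((∑ i ∈ Finset.range p, x ^ i) ^ 2 * (∑ i ∈ Finset.range q, x ^ i) *
        X ^ (p * q + 1)) := by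
    rw [← mul_geom_sum x p, ← mul_geom_sum x q]
    ring
  have hnum : (x - 1) ^ (3 + 1) ∣ (x - 1) * X ^ (p + q) * torusPhiNumerator q (x ^ p) := by
    rw [pow_succ', mul_assoc]
    exact mul_dvd_mul_left _ <| Dvd.dvd.mul_left
      ((pow_dvd_pow_of_dvd (sub_one_dvd_pow_sub_one x p) 3).trans
        (sub_one_pow_three_dvd_torusPhiNumerator q _)) _
  rw [torusPsi_X_eq p q hp.ne' hq.ne', hden]
  exact RatFunc.vanishesAt_div_of_pow_succ_dvd (X_pow_sub_C_ne_zero two_pos 1) hnum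
    (by simp [x]) (by simp [x, Polynomial.eval_finsetSum, hp.ne', hq.ne'])

/-- `ψ_{p,q}` is odd under inversion, `ψ_{p,q}(s⁻¹) = −ψ_{p,q}(s)`; moreover it has no
pole at `s = 1` and vanishes there: it can be written as `f/g` with polynomials `f`, `g`
such that `g(1) ≠ 0` and `f(1) = 0` (i.e. it lies in the local ring of rational functions
regular at `s = 1`, with evaluation `0` there). -/
theorem torusPsi_odd_and_vanishes_at_one (p q : ℕ) (hp : 0 < p) (hq : 0 < q)
    (hpq : Nat.Coprime p q) :
    torusPsi p q ((RatFunc.X : RatFunc ℚ)⁻¹) = -torusPsi p q (RatFunc.X : RatFunc ℚ) ∧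
    ∃ f g : ℚ[X],
      torusPsi p q (RatFunc.X : RatFunc ℚ) =
        algebraMap ℚ[X] (RatFunc ℚ) f / algebraMap ℚ[X] (RatFunc ℚ) g ∧
      g.eval 1 ≠ 0 ∧ f.eval 1 = 0 :=
  torusPsi_odd_and_vanishes_at_one_general p q hp hq
end

section
/- Let p, q ≥ 2 be coprime integers. The rational function Θ̂_{p,q}(s) = ψ_{p,q}(s)·ψ_{q,p}(s) / (2(s − s^{−1})²) is a Laurent polynomial in t = s² with rational coefficients which is symmetric under t ↦ t^{−1}, and its degree in t (the maximal exponent of t with nonzero coefficient) equals (p−1)(q−1) − 1. -/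
/-!
Put `t = s²` and `x = tᵖ`. The bracket in `φ_{p,q}(s)` is
`((x^q - 1)(x + 1) - q (x^q + 1)(x - 1)) / ((x - 1)(x^q - 1))`, and its numerator equals
`-(x - 1)³ G_q(x)` with `G_q(x) = ∑_{k < q-1} (k+1)(q-1-k) xᵏ`. After this substitution every
denominator of `ψ_{p,q}(s) ψ_{q,p}(s) / (2(s - s⁻¹)²)` cancels, leaving
`Θ̂_{p,q}(s) = ½ · t^{-((p-1)(q-1)-1)} · G_q(tᵖ) · G_p(t^q)`.
The polynomial `G_q` is palindromic of degree `q - 2` with leading coefficient `q - 1`, so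
`G_q(tᵖ) G_p(t^q)` is palindromic of degree `2((p-1)(q-1)-1)`: after the shift, the Laurent
polynomial is invariant under `t ↦ t⁻¹` and has top term `(p-1)(q-1)/2 · t^{(p-1)(q-1)-1}`.
-/

open Polynomial Finset

namespace Polynomial

theorem revAt_mul_right {p : ℕ} (hp : 0 < p) (N n : ℕ) :
    revAt (N * p) (n * p) = revAt N n * p := by
  by_cases hn : n ≤ N
  · rw [revAt_le hn, revAt_le (Nat.mul_le_mul_right p hn), Nat.sub_mul]
  · rw [revAt_eq_self_of_lt (Nat.mul_lt_mul_of_pos_right (by omega) hp),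
      revAt_eq_self_of_lt (by omega)]

variable {R : Type*} [CommSemiring R]

theorem reflect_expand {p : ℕ} (hp : 0 < p) (N : ℕ) (f : R[X]) :
    reflect (N * p) (expand R p f) = expand R p (reflect N f) := by
  induction f using Polynomial.induction_on' with
  | add f g hf hg => simp only [map_add, reflect_add, hf, hg]
  | monomial n r =>
    rw [expand_monomial, ← C_mul_X_pow_eq_monomial, ← C_mul_X_pow_eq_monomial,
      reflect_C_mul_X_pow, reflect_C_mul_X_pow, revAt_mul_right hp]
    simp only [map_mul, expand_C, map_pow, expand_X, pow_mul']

theorem reverse_expand {p : ℕ} (hp : 0 < p) (f : R[X]) :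
    (expand R p f).reverse = expand R p f.reverse := by
  rw [reverse, natDegree_expand, reflect_expand hp, reverse]

end Polynomial

namespace LaurentPolynomial

variable {R : Type*}

theorem eval₂_eq_sum {S : Type*} [CommSemiring R] [CommSemiring S] (f : R →+* S) (x : Sˣ)
    (g : R[T;T⁻¹]) : eval₂ f x g = g.coeff.sum fun n r => f r * ↑(x ^ n) := by
  induction g using LaurentPolynomial.induction_on' with
  | add g h hg hh =>
    rw [map_add, hg, hh, AddMonoidAlgebra.coeff_add,
      Finsupp.sum_add_index' (by simp) (fun _ _ _ => by rw [map_add, add_mul])]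
  | C_mul_T n r =>
    rw [eval₂_C_mul_T, ← single_eq_C_mul_T, AddMonoidAlgebra.coeff_single,
      Finsupp.sum_single_index (by simp)]

theorem coeff_T_mul_toLaurent [Semiring R] (m : ℤ) (f : R[X]) (k : ℕ) :
    (T m * toLaurent f).coeff (m + k) = f.coeff k := by
  rw [T, AddMonoidAlgebra.coeff_single_mul_apply, one_mul, neg_add_cancel_left, coeff_toLaurent]
  exact Finsupp.mapDomain_apply Nat.castEmbedding.injective _ k

theorem le_of_mem_support_T_mul_toLaurent [Semiring R] {m n : ℤ} {f : R[X]}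
    (hn : n ∈ (T m * toLaurent f).coeff.support) : n ≤ m + f.natDegree := by
  rw [Finsupp.mem_support_iff, T, AddMonoidAlgebra.coeff_single_mul_apply, one_mul,
    ← Finsupp.mem_support_iff, support_coeff_toLaurent, Finset.mem_map] at hn
  obtain ⟨k, hk, hkn⟩ := hn
  have := le_natDegree_of_mem_supp k hk
  simp only [Nat.castEmbedding_apply] at hkn
  omega

theorem invert_T_neg_mul_toLaurent [CommSemiring R] {f : R[X]} (hf : f.reverse = f) {n : ℤ}
    (hn : (f.natDegree : ℤ) = 2 * n) :
    invert (T (-n) * toLaurent f) = T (-n) * toLaurent f := by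
  have h := congrArg invert (toLaurent_reverse f)
  rw [hf, map_mul, involutive_invert, invert_T, hn] at h
  rw [map_mul, invert_T, neg_neg, h, mul_left_comm, ← T_add, mul_comm]
  congr 2
  ring

end LaurentPolynomial

theorem RatFunc.X_pow_ne_one_s7 {K : Type*} [Field K] {n : ℕ} (hn : 0 < n) :
    (RatFunc.X : RatFunc K) ^ n ≠ 1 := fun h =>
  (RatFunc.transcendental_X.pow hn) (h ▸ isAlgebraic_one)

/-- At `x = s^{2p}`, `φ_{p,q}(s) = -(x - 1)² G_q(x) / (x^q - 1)` with `G_q = torusPhiPoly q`. -/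
noncomputable def torusPhiPoly (R : Type*) [Semiring R] (q : ℕ) : R[X] :=
  ∑ k ∈ range (q - 1), C (((k + 1) * (q - 1 - k) : ℕ) : R) * X ^ k

section TorusPhiPoly

variable {R : Type*}

/-- Valid for every `k`: for `k ≥ q - 1` the truncated subtraction `q - 1 - k` is `0`. -/
theorem coeff_torusPhiPoly [Semiring R] (q k : ℕ) :
    (torusPhiPoly R q).coeff k = ((k + 1) * (q - 1 - k) : ℕ) := by
  rw [torusPhiPoly, finsetSum_coeff]
  simp only [coeff_C_mul_X_pow, sum_ite_eq, mem_range]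
  split_ifs with hk
  · rfl
  · rw [Nat.sub_eq_zero_of_le (by omega), mul_zero, Nat.cast_zero]

theorem torusPhiPoly_succ [Semiring R] (q : ℕ) :
    torusPhiPoly R (q + 1) =
      torusPhiPoly R q + ∑ k ∈ range q, C ((k + 1 : ℕ) : R) * X ^ k := by
  ext k
  simp only [coeff_add, coeff_torusPhiPoly, finsetSum_coeff, coeff_C_mul_X_pow, sum_ite_eq,
    mem_range]
  split_ifs with hk
  · rw [Nat.add_sub_cancel, show q - k = q - 1 - k + 1 by omega, mul_add_one, Nat.cast_add]
  · rw [Nat.sub_eq_zero_of_le (by omega), Nat.sub_eq_zero_of_le (by omega)]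
    simp

theorem sub_one_sq_mul_sum_range_succ_mul_pow [CommRing R] (x : R) (q : ℕ) :
    (x - 1) ^ 2 * ∑ k ∈ range q, ((k + 1 : ℕ) : R) * x ^ k =
      q * x ^ (q + 1) - (q + 1) * x ^ q + 1 := by
  induction q with
  | zero => simp
  | succ q ih =>
    rw [sum_range_succ, mul_add, ih]
    push_cast
    ring

theorem sub_one_pow_three_mul_torusPhiPoly [CommRing R] (q : ℕ) :
    (X - 1) ^ 3 * torusPhiPoly R q =
      (q : R[X]) * (X ^ q + 1) * (X - 1) - (X ^ q - 1) * (X + 1) := by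
  induction q with
  | zero => simp [torusPhiPoly]
  | succ q ih =>
    have hsum := sub_one_sq_mul_sum_range_succ_mul_pow (X : R[X]) q
    rw [torusPhiPoly_succ, mul_add, ih]
    simp only [map_natCast]
    push_cast at hsum ⊢
    linear_combination (X - 1) * hsum

theorem map_torusPhiPoly {S : Type*} [Semiring R] [Semiring S] (f : R →+* S) (q : ℕ) :
    (torusPhiPoly R q).map f = torusPhiPoly S q := by
  simp only [torusPhiPoly, Polynomial.map_sum, Polynomial.map_mul, map_natCast,
    Polynomial.map_natCast, Polynomial.map_pow, map_X]

theorem reflect_torusPhiPoly [Semiring R] (q : ℕ) :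
    reflect (q - 2) (torusPhiPoly R q) = torusPhiPoly R q := by
  ext k
  rw [coeff_reflect, coeff_torusPhiPoly, coeff_torusPhiPoly]
  by_cases hk : k ≤ q - 2
  · rw [revAt_le hk]
    rcases lt_or_ge q 2 with hq | hq
    · obtain rfl : k = 0 := by omega
      rw [show q - 2 = 0 by omega]
    · rw [show q - 2 - k + 1 = q - 1 - k by omega, show q - 1 - (q - 2 - k) = k + 1 by omega,
        mul_comm]
  · rw [revAt_eq_self_of_lt (by omega)]

variable [Semiring R] [CharZero R] {q : ℕ}

theorem natDegree_torusPhiPoly (hq : 2 ≤ q) : (torusPhiPoly R q).natDegree = q - 2 := by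
  refine natDegree_eq_of_le_of_coeff_ne_zero ?_ ?_
  · rw [natDegree_le_iff_coeff_eq_zero]
    intro k hk
    rw [coeff_torusPhiPoly, Nat.sub_eq_zero_of_le (by omega : q - 1 ≤ k), mul_zero, Nat.cast_zero]
  · rw [coeff_torusPhiPoly, Nat.cast_ne_zero]
    exact Nat.mul_ne_zero (by omega) (by omega)

theorem leadingCoeff_torusPhiPoly (hq : 2 ≤ q) :
    (torusPhiPoly R q).leadingCoeff = ((q - 1 : ℕ) : R) := by
  rw [leadingCoeff, natDegree_torusPhiPoly hq, coeff_torusPhiPoly,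
    show q - 2 + 1 = q - 1 by omega, show q - 1 - (q - 2) = 1 by omega, mul_one]

theorem reverse_torusPhiPoly (hq : 2 ≤ q) : (torusPhiPoly R q).reverse = torusPhiPoly R q := by
  rw [reverse, natDegree_torusPhiPoly hq, reflect_torusPhiPoly]

end TorusPhiPoly

section FieldIdentities

variable {F : Type*} [Field F] {p q : ℕ} {s : F}

theorem torusPsi_eq_eval_torusPhiPoly (hs : s ≠ 0) (hpq : (s ^ 2) ^ (p * q) ≠ 1) :
    torusPsi p q s = -(s ^ (p + q) * (s ^ 2 - 1) * ((s ^ 2) ^ p - 1) *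
      (torusPhiPoly F q).eval ((s ^ 2) ^ p)) / (s ^ (p * q + 1) * ((s ^ 2) ^ q - 1)) := by
  have hp : (s ^ 2) ^ p ≠ 1 := fun h => hpq (by rw [pow_mul, h, one_pow])
  have hq : (s ^ 2) ^ q ≠ 1 := fun h => hpq (by rw [mul_comm, pow_mul, h, one_pow])
  have hG := congrArg (eval ((s ^ 2) ^ p)) (sub_one_pow_three_mul_torusPhiPoly (R := F) q)
  simp only [eval_mul, eval_sub, eval_add, eval_pow, eval_X, eval_one, eval_natCast] at hG
  rw [eq_div_iff (mul_ne_zero (pow_ne_zero _ hs) (sub_ne_zero.mpr hq))]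
  -- `s ^ n - s⁻¹ ^ n = ((s ^ n) ^ 2 - 1) / s ^ n`: `field_simp` must cancel these factors.
  rw [← pow_mul, mul_comm 2, pow_mul, ← sub_ne_zero] at hp hq hpq
  unfold torusPsi torusDelta torusPhi
  simp only [inv_pow]
  field_simp
  linear_combination s ^ (p * q + 1) * ((s ^ 2) ^ q - 1) * (s ^ 2 - 1) * s ^ p * s ^ q * hG

theorem two_mul_pow_mul_torusThetaHat (hs : s ≠ 0) (h2 : (2 : F) ≠ 0)
    (hpq : (s ^ 2) ^ (p * q) ≠ 1) :
    2 * (s ^ 2) ^ (p * q) * torusThetaHat p q s = (s ^ 2) ^ (p + q) *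
      (torusPhiPoly F q).eval ((s ^ 2) ^ p) * (torusPhiPoly F p).eval ((s ^ 2) ^ q) := by
  have hqp : (s ^ 2) ^ (q * p) ≠ 1 := by rwa [mul_comm]
  have h1 : s ^ 2 ≠ 1 := fun h => hpq (by rw [h, one_pow])
  have hp : (s ^ 2) ^ p ≠ 1 := fun h => hpq (by rw [pow_mul, h, one_pow])
  have hq : (s ^ 2) ^ q ≠ 1 := fun h => hpq (by rw [mul_comm, pow_mul, h, one_pow])
  rw [← sub_ne_zero] at h1 hp hq
  unfold torusThetaHat
  rw [torusPsi_eq_eval_torusPhiPoly hs hpq, torusPsi_eq_eval_torusPhiPoly hs hqp]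
  field_simp
  ring

end FieldIdentities

noncomputable def torusThetaPoly (R : Type*) [CommSemiring R] (p q : ℕ) : R[X] :=
  expand R p (torusPhiPoly R q) * expand R q (torusPhiPoly R p)

section TorusThetaPoly

variable {R : Type*} [CommSemiring R]

theorem map_torusThetaPoly {S : Type*} [CommSemiring S] (f : R →+* S) (p q : ℕ) :
    (torusThetaPoly R p q).map f = torusThetaPoly S p q := by
  rw [torusThetaPoly, Polynomial.map_mul, map_expand, map_expand, map_torusPhiPoly,
    map_torusPhiPoly, torusThetaPoly]

variable [NoZeroDivisors R] [CharZero R] {p q : ℕ}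

theorem natDegree_torusThetaPoly (hp : 2 ≤ p) (hq : 2 ≤ q) :
    ((torusThetaPoly R p q).natDegree : ℤ) = 2 * (((p : ℤ) - 1) * ((q : ℤ) - 1) - 1) := by
  have hne {a b : ℕ} (ha : 2 ≤ a) (hb : 0 < b) : expand R b (torusPhiPoly R a) ≠ 0 := by
    rw [← leadingCoeff_ne_zero, leadingCoeff_expand hb, leadingCoeff_torusPhiPoly ha,
      Nat.cast_ne_zero]
    omega
  rw [torusThetaPoly, natDegree_mul (hne hq (by omega)) (hne hp (by omega)), natDegree_expand,
    natDegree_expand, natDegree_torusPhiPoly hq, natDegree_torusPhiPoly hp]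
  push_cast [Nat.cast_sub hp, Nat.cast_sub hq]
  ring

theorem leadingCoeff_torusThetaPoly (hp : 2 ≤ p) (hq : 2 ≤ q) :
    (torusThetaPoly R p q).leadingCoeff = ((q - 1 : ℕ) : R) * ((p - 1 : ℕ) : R) := by
  rw [torusThetaPoly, leadingCoeff_mul, leadingCoeff_expand (by omega),
    leadingCoeff_expand (by omega), leadingCoeff_torusPhiPoly hq, leadingCoeff_torusPhiPoly hp]

theorem reverse_torusThetaPoly (hp : 2 ≤ p) (hq : 2 ≤ q) :
    (torusThetaPoly R p q).reverse = torusThetaPoly R p q := by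
  rw [torusThetaPoly, reverse_mul_of_domain, reverse_expand (by omega), reverse_expand (by omega),
    reverse_torusPhiPoly hq, reverse_torusPhiPoly hp]

end TorusThetaPoly

/-- The variable `T` stands for `t = s²`. -/
noncomputable def torusThetaHatLaurent (p q : ℕ) : LaurentPolynomial ℚ :=
  LaurentPolynomial.C (1 / 2) * (LaurentPolynomial.T (-(((p : ℤ) - 1) * ((q : ℤ) - 1) - 1)) *
    toLaurent (torusThetaPoly ℚ p q))

section TorusThetaHatLaurent

open LaurentPolynomial

variable {p q : ℕ}

theorem eval₂_torusThetaHatLaurent {K : Type*} [Field K] (f : ℚ →+* K) {u : Kˣ}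
    (hu : ((u : K) ^ 2) ^ (p * q) ≠ 1) :
    eval₂ f (u ^ 2) (torusThetaHatLaurent p q) = torusThetaHat p q (u : K) := by
  have h2 : (2 : K) ≠ 0 := by simpa using (map_ne_zero f).mpr (two_ne_zero : (2 : ℚ) ≠ 0)
  have hs : (u : K) ^ 2 ≠ 0 := pow_ne_zero 2 u.ne_zero
  have hΘ := two_mul_pow_mul_torusThetaHat u.ne_zero h2 hu
  rw [torusThetaHatLaurent, map_mul, map_mul, LaurentPolynomial.eval₂_C, eval₂_T,
    eval₂_toLaurent, ← eval_map, map_torusThetaPoly, torusThetaPoly, eval_mul, expand_eval,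
    expand_eval, Units.val_zpow_eq_zpow_val, Units.val_pow_eq_pow_val,
    show -(((p : ℤ) - 1) * ((q : ℤ) - 1) - 1) = ((p + q : ℕ) : ℤ) - ((p * q : ℕ) : ℤ) by
      push_cast; ring,
    zpow_sub₀ hs, zpow_natCast, zpow_natCast, map_div₀, map_one, map_ofNat]
  field_simp
  linear_combination -hΘ

theorem invert_torusThetaHatLaurent (hp : 2 ≤ p) (hq : 2 ≤ q) :
    invert (torusThetaHatLaurent p q) = torusThetaHatLaurent p q := by
  rw [torusThetaHatLaurent, map_mul, invert_C,
    invert_T_neg_mul_toLaurent (reverse_torusThetaPoly hp hq) (natDegree_torusThetaPoly hp hq)]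

theorem le_of_mem_support_torusThetaHatLaurent (hp : 2 ≤ p) (hq : 2 ≤ q) {n : ℤ}
    (hn : n ∈ (torusThetaHatLaurent p q).coeff.support) :
    n ≤ ((p : ℤ) - 1) * ((q : ℤ) - 1) - 1 := by
  rw [torusThetaHatLaurent, Finsupp.mem_support_iff, ← single_eq_C,
    AddMonoidAlgebra.coeff_single_mul_apply, neg_zero, zero_add] at hn
  have hle := le_of_mem_support_T_mul_toLaurent
    (Finsupp.mem_support_iff.mpr (right_ne_zero_of_mul hn))
  rw [natDegree_torusThetaPoly hp hq] at hle
  linarith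

theorem coeff_torusThetaHatLaurent_degree (hp : 2 ≤ p) (hq : 2 ≤ q) :
    (torusThetaHatLaurent p q).coeff (((p : ℤ) - 1) * ((q : ℤ) - 1) - 1) =
      ((q - 1 : ℕ) : ℚ) * ((p - 1 : ℕ) : ℚ) / 2 := by
  have hdeg : ((p : ℤ) - 1) * ((q : ℤ) - 1) - 1 =
      -(((p : ℤ) - 1) * ((q : ℤ) - 1) - 1) + ((torusThetaPoly ℚ p q).natDegree : ℕ) := by
    rw [natDegree_torusThetaPoly hp hq]
    ring
  rw [torusThetaHatLaurent, ← single_eq_C, AddMonoidAlgebra.coeff_single_mul_apply, neg_zero,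
    zero_add]
  nth_rw 2 [hdeg]
  rw [coeff_T_mul_toLaurent, ← leadingCoeff, leadingCoeff_torusThetaPoly hp hq]
  ring

end TorusThetaHatLaurent

theorem torusThetaHat_is_symmetric_laurent_of_degree_general (p q : ℕ) (hp : 2 ≤ p) (hq : 2 ≤ q) :
    ∃ c : ℤ →₀ ℚ,
      torusThetaHat p q (RatFunc.X : RatFunc ℚ) =
        c.sum (fun n a => RatFunc.C a * (RatFunc.X : RatFunc ℚ) ^ (2 * n)) ∧
      (∀ n : ℤ, c (-n) = c n) ∧
      (∀ n ∈ c.support, n ≤ ((p : ℤ) - 1) * ((q : ℤ) - 1) - 1) ∧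
      (((p : ℤ) - 1) * ((q : ℤ) - 1) - 1) ∈ c.support := by
  let u : (RatFunc ℚ)ˣ := Units.mk0 RatFunc.X RatFunc.X_ne_zero
  have hu : ((u : RatFunc ℚ) ^ 2) ^ (p * q) ≠ 1 := by
    rw [← pow_mul]
    exact RatFunc.X_pow_ne_one_s7 (by positivity)
  refine ⟨(torusThetaHatLaurent p q).coeff, ?_, fun n => ?_,
    fun n => le_of_mem_support_torusThetaHatLaurent hp hq, ?_⟩
  · have hΘ := eval₂_torusThetaHatLaurent RatFunc.C hu
    rw [Units.val_mk0] at hΘ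
    rw [← hΘ, LaurentPolynomial.eval₂_eq_sum]
    refine Finsupp.sum_congr fun n _ => ?_
    rw [Units.val_zpow_eq_zpow_val, Units.val_pow_eq_pow_val, Units.val_mk0, ← zpow_natCast,
      ← zpow_mul, Nat.cast_ofNat]
  · rw [← LaurentPolynomial.invert_apply, invert_torusThetaHatLaurent hp hq]
  · rw [Finsupp.mem_support_iff, coeff_torusThetaHatLaurent_degree hp hq]
    exact div_ne_zero (mul_ne_zero (Nat.cast_ne_zero.mpr (by omega))
      (Nat.cast_ne_zero.mpr (by omega))) two_ne_zero

/-- For coprime integers `p, q ≥ 2`, the reduced 2-loop polynomial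
`Θ̂_{p,q}(s) = ψ_{p,q}(s)·ψ_{q,p}(s)/(2(s − s⁻¹)²)` is a Laurent polynomial in `t = s²`
with rational coefficients, symmetric under `t ↦ t⁻¹`, and its degree in `t` (the maximal
exponent of `t` occurring with nonzero coefficient) equals `(p−1)(q−1) − 1`. -/
theorem torusThetaHat_is_symmetric_laurent_of_degree (p q : ℕ) (hp : 2 ≤ p) (hq : 2 ≤ q)
    (hpq : Nat.Coprime p q) :
    ∃ c : ℤ →₀ ℚ,
      torusThetaHat p q (RatFunc.X : RatFunc ℚ) =
        c.sum (fun n a => RatFunc.C a * (RatFunc.X : RatFunc ℚ) ^ (2 * n)) ∧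
      (∀ n : ℤ, c (-n) = c n) ∧
      (∀ n ∈ c.support, n ≤ ((p : ℤ) - 1) * ((q : ℤ) - 1) - 1) ∧
      (((p : ℤ) - 1) * ((q : ℤ) - 1) - 1) ∈ c.support :=
  torusThetaHat_is_symmetric_laurent_of_degree_general p q hp hq
end

section
/- Let p ≥ 2 be an integer coprime to 3. In ℚ(s), writing t = s², the following identity holds: Θ̂_{p,3}(s) = ((s^p + s^{−p})/(s³ − s^{−3})³) · ( (p−1)·(s^{3(p+1)} − s^{−3(p+1)}) − (p+1)·(s^{3(p−1)} − s^{−3(p−1)}) ). Equivalently, Θ̂_{p,3}(s) = (t³·(s^p + s^{−p})/(t³ − 1)²)·( (p−1)·(s^{3p} + s^{−3p}) − 2·(s^{3(p−1)} − s^{−3(p−1)})/(s³ − s^{−3}) ). -/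
/-! Put `a = s^p`. Since `(a³ − a⁻³)/(a − a⁻¹) = a² + 1 + a⁻²` and
`a³ + a⁻³ = (a + a⁻¹)(a² − 1 + a⁻²)`, the factor `a³ − a⁻³` of `Δ_{p,3}` collapses `φ_{p,3}` to
`−2(a + a⁻¹)(a − a⁻¹)²`, so that `ψ_{p,3} = −2(s − s⁻¹)(a + a⁻¹)(a − a⁻¹)/(s³ − s⁻³)`. Then
`Θ̂_{p,3} = (a + a⁻¹)/(y − y⁻¹)³ · (p(b + b⁻¹)(y − y⁻¹) − (b − b⁻¹)(y + y⁻¹))` with `b = a³`,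
`y = s³`, and expanding the two products into `by − (by)⁻¹` and `b/y − y/b` gives both forms. -/

section

variable {F : Type*} [Field F]

theorem sub_ne_zero_of_pow_sub_pow_ne_zero {a b : F} {n : ℕ} (h : a ^ n - b ^ n ≠ 0) :
    a - b ≠ 0 :=
  fun hab => h (zero_dvd_iff.mp (hab ▸ sub_dvd_pow_sub_pow a b n))

theorem pow_sub_eq_mul_inv_pow {a : F} (ha : a ≠ 0) {m n : ℕ} (h : n ≤ m) :
    a ^ (m - n) = a ^ m * a⁻¹ ^ n := by
  rw [pow_sub₀ a ha h, inv_pow]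

theorem sub_mul_torusPhi_three (p : ℕ) (s : F) (hb : s ^ (p * 3) - s⁻¹ ^ (p * 3) ≠ 0) :
    (s ^ (p * 3) - s⁻¹ ^ (p * 3)) * torusPhi p 3 s =
      -2 * (s ^ p + s⁻¹ ^ p) * (s ^ p - s⁻¹ ^ p) ^ 2 := by
  rw [torusPhi, Nat.cast_ofNat, pow_mul, pow_mul] at *
  have ha := sub_ne_zero_of_pow_sub_pow_ne_zero hb
  generalize s ^ p = a, s⁻¹ ^ p = a' at *
  field_simp
  ring

theorem torusPsi_three (p : ℕ) (s : F) (hb : s ^ (p * 3) - s⁻¹ ^ (p * 3) ≠ 0) :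
    torusPsi p 3 s =
      -2 * (s - s⁻¹) * (s ^ p + s⁻¹ ^ p) * (s ^ p - s⁻¹ ^ p) / (s ^ 3 - s⁻¹ ^ 3) := by
  have ha : s ^ p - s⁻¹ ^ p ≠ 0 :=
    sub_ne_zero_of_pow_sub_pow_ne_zero (n := 3) (by rwa [← pow_mul, ← pow_mul])
  calc torusPsi p 3 s
      = (s ^ (p * 3) - s⁻¹ ^ (p * 3)) * torusPhi p 3 s * (s - s⁻¹) /
          ((s ^ p - s⁻¹ ^ p) * (s ^ 3 - s⁻¹ ^ 3)) := by
        rw [torusPsi, torusDelta]; ring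
    _ = _ := by
        rw [sub_mul_torusPhi_three p s hb]
        field_simp

theorem torusThetaHat_three (p : ℕ) (s : F) (h₂ : (2 : F) ≠ 0) (hy : s ^ 3 - s⁻¹ ^ 3 ≠ 0)
    (hb : s ^ (p * 3) - s⁻¹ ^ (p * 3) ≠ 0) :
    torusThetaHat p 3 s = (s ^ p + s⁻¹ ^ p) / (s ^ 3 - s⁻¹ ^ 3) ^ 3 *
      (p * (s ^ (p * 3) + s⁻¹ ^ (p * 3)) * (s ^ 3 - s⁻¹ ^ 3) -
        (s ^ (p * 3) - s⁻¹ ^ (p * 3)) * (s ^ 3 + s⁻¹ ^ 3)) := by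
  have hx := sub_ne_zero_of_pow_sub_pow_ne_zero hy
  rw [torusThetaHat, torusPsi_three p s hb, torusPsi, torusDelta, torusPhi, mul_comm 3 p]
  rw [pow_mul, pow_mul] at *
  have ha := sub_ne_zero_of_pow_sub_pow_ne_zero hb
  -- The remaining identity does not need `s * s⁻¹ = 1`; hiding that relation from
  -- `field_simp` keeps it from clearing `s⁻¹` into powers of `s`.
  generalize s ^ p = a, s⁻¹ ^ p = a', s⁻¹ = s' at *
  field_simp
  ring

theorem torusThetaHat_three_eq_shift (p : ℕ) (hp : 1 ≤ p) (s : F) (h₂ : (2 : F) ≠ 0)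
    (hy : s ^ 3 - s⁻¹ ^ 3 ≠ 0) (hb : s ^ (p * 3) - s⁻¹ ^ (p * 3) ≠ 0) :
    torusThetaHat p 3 s = (s ^ p + s⁻¹ ^ p) / (s ^ 3 - s⁻¹ ^ 3) ^ 3 *
      ((p - 1) * (s ^ (3 * (p + 1)) - s⁻¹ ^ (3 * (p + 1))) -
        (p + 1) * (s ^ (3 * (p - 1)) - s⁻¹ ^ (3 * (p - 1)))) := by
  have hs : s ≠ 0 := by rintro rfl; simp at hy
  rw [torusThetaHat_three p s h₂ hy hb, show 3 * (p + 1) = p * 3 + 3 by ring,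
    show 3 * (p - 1) = p * 3 - 3 by omega, pow_add, pow_add,
    pow_sub_eq_mul_inv_pow hs (by omega), pow_sub_eq_mul_inv_pow (inv_ne_zero hs) (by omega),
    inv_inv]
  ring

theorem torusThetaHat_three_eq_sq (p : ℕ) (hp : 1 ≤ p) (s : F) (h₂ : (2 : F) ≠ 0)
    (hy : s ^ 3 - s⁻¹ ^ 3 ≠ 0) (hb : s ^ (p * 3) - s⁻¹ ^ (p * 3) ≠ 0) :
    torusThetaHat p 3 s = (s ^ 2) ^ 3 * (s ^ p + s⁻¹ ^ p) / ((s ^ 2) ^ 3 - 1) ^ 2 *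
      ((p - 1) * (s ^ (3 * p) + s⁻¹ ^ (3 * p)) -
        2 * (s ^ (3 * (p - 1)) - s⁻¹ ^ (3 * (p - 1))) / (s ^ 3 - s⁻¹ ^ 3)) := by
  have hs : s ≠ 0 := by rintro rfl; simp at hy
  have ht : (s ^ 2) ^ 3 - 1 = s ^ 3 * (s ^ 3 - s⁻¹ ^ 3) := by field_simp
  rw [torusThetaHat_three p s h₂ hy hb, ht, ← pow_mul, show 2 * 3 = 3 + 3 by rfl, pow_add,
    mul_comm 3 p, show 3 * (p - 1) = p * 3 - 3 by omega,
    pow_sub_eq_mul_inv_pow hs (by omega), pow_sub_eq_mul_inv_pow (inv_ne_zero hs) (by omega),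
    inv_inv]
  generalize s⁻¹ = s' at *
  field_simp
  ring

end

theorem Transcendental.pow_sub_inv_pow_ne_zero {K L : Type*} [Field K] [Field L] [Algebra K L]
    {s : L} (hs : Transcendental K s) {n : ℕ} (hn : n ≠ 0) : s ^ n - s⁻¹ ^ n ≠ 0 := by
  have hs₀ : s ≠ 0 := fun h => hs (h ▸ isAlgebraic_zero)
  have hpow : s ^ (2 * n) ≠ 1 := fun h => hs.pow (by omega) (h ▸ isAlgebraic_one)
  intro h
  apply hpow
  rw [two_mul, pow_add]
  nth_rw 2 [sub_eq_zero.mp h]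
  rw [← mul_pow, mul_inv_cancel₀ hs₀, one_pow]

theorem torusThetaHat_p3_formula_general (p : ℕ) (hp : 2 ≤ p) :
    ∀ t : RatFunc ℚ, t = (RatFunc.X : RatFunc ℚ) ^ 2 →
      (torusThetaHat p 3 (RatFunc.X : RatFunc ℚ) =
        ((RatFunc.X ^ p + RatFunc.X⁻¹ ^ p) / (RatFunc.X ^ 3 - RatFunc.X⁻¹ ^ 3) ^ 3) *
          (((p : RatFunc ℚ) - 1) *
              (RatFunc.X ^ (3 * (p + 1)) - RatFunc.X⁻¹ ^ (3 * (p + 1))) -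
            ((p : RatFunc ℚ) + 1) *
              (RatFunc.X ^ (3 * (p - 1)) - RatFunc.X⁻¹ ^ (3 * (p - 1))))) ∧
      (torusThetaHat p 3 (RatFunc.X : RatFunc ℚ) =
        (t ^ 3 * (RatFunc.X ^ p + RatFunc.X⁻¹ ^ p) / (t ^ 3 - 1) ^ 2) *
          (((p : RatFunc ℚ) - 1) * (RatFunc.X ^ (3 * p) + RatFunc.X⁻¹ ^ (3 * p)) -
            2 * (RatFunc.X ^ (3 * (p - 1)) - RatFunc.X⁻¹ ^ (3 * (p - 1))) /
              (RatFunc.X ^ 3 - RatFunc.X⁻¹ ^ 3))) := by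
  rintro t rfl
  -- `RatFunc.transcendental_X` uses the `ℚ`-algebra structure coming from `ℚ[X]`.
  have hX : Transcendental ℚ (RatFunc.X : RatFunc ℚ) := by
    convert RatFunc.transcendental_X (K := ℚ)
    exact Subsingleton.elim _ _
  have hy := hX.pow_sub_inv_pow_ne_zero three_ne_zero
  have hb := hX.pow_sub_inv_pow_ne_zero (n := p * 3) (by omega)
  exact ⟨torusThetaHat_three_eq_shift p (by omega) _ two_ne_zero hy hb,
    torusThetaHat_three_eq_sq p (by omega) _ two_ne_zero hy hb⟩

/-- The reduced 2-loop polynomial of the `(p,3)` torus knot, for `p ≥ 2` coprime to `3`.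
In `ℚ(s)`, with `t = s²`,
`Θ̂_{p,3}(s) = ((s^p + s^{−p})/(s³ − s^{−3})³)·( (p−1)(s^{3(p+1)} − s^{−3(p+1)})
  − (p+1)(s^{3(p−1)} − s^{−3(p−1)}) )`, equivalently
`Θ̂_{p,3}(s) = (t³(s^p + s^{−p})/(t³ − 1)²)·( (p−1)(s^{3p} + s^{−3p})
  − 2(s^{3(p−1)} − s^{−3(p−1)})/(s³ − s^{−3}) )`. -/
theorem torusThetaHat_p3_formula (p : ℕ) (hp : 2 ≤ p) (hp3 : Nat.Coprime p 3) :
    ∀ t : RatFunc ℚ, t = (RatFunc.X : RatFunc ℚ) ^ 2 →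
      (torusThetaHat p 3 (RatFunc.X : RatFunc ℚ) =
        ((RatFunc.X ^ p + RatFunc.X⁻¹ ^ p) / (RatFunc.X ^ 3 - RatFunc.X⁻¹ ^ 3) ^ 3) *
          (((p : RatFunc ℚ) - 1) *
              (RatFunc.X ^ (3 * (p + 1)) - RatFunc.X⁻¹ ^ (3 * (p + 1))) -
            ((p : RatFunc ℚ) + 1) *
              (RatFunc.X ^ (3 * (p - 1)) - RatFunc.X⁻¹ ^ (3 * (p - 1))))) ∧
      (torusThetaHat p 3 (RatFunc.X : RatFunc ℚ) =
        (t ^ 3 * (RatFunc.X ^ p + RatFunc.X⁻¹ ^ p) / (t ^ 3 - 1) ^ 2) *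
          (((p : RatFunc ℚ) - 1) * (RatFunc.X ^ (3 * p) + RatFunc.X⁻¹ ^ (3 * p)) -
            2 * (RatFunc.X ^ (3 * (p - 1)) - RatFunc.X⁻¹ ^ (3 * (p - 1))) /
              (RatFunc.X ^ 3 - RatFunc.X⁻¹ ^ 3))) :=
  torusThetaHat_p3_formula_general p hp
end
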